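/- arXiv:math/0402021 — 2 statements merged into one kernel-verified Lean document; each statement's English description precedes it below -/
import Mathlib

section
/- Let G₆,₃ be the 6-dimensional real Lie algebra with basis x₁,…,x₆ and nonzero brackets [x₁,x₂]=x₄, [x₁,x₃]=x₅, [x₂,x₃]=x₆. Define J₀ : G₆,₃ → G₆,₃ by J₀x₁ = x₂, J₀x₂ = −x₁, J₀x₃ = x₄, J₀x₄ = −x₃, J₀x₅ = x₆, J₀x₆ = −x₅. Then J₀² = −1 and J₀ satisfies the Nijenhuis integrability condition [J₀X,J₀Y] − [X,Y] − J₀[J₀X,Y] − J₀[X,J₀Y] = 0 for all X,Y. -/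
/-!
The Nijenhuis tensor `N` of a complex structure `J` is bilinear, alternating and satisfies
`N (J X) Y = N X (J Y) = -J (N X Y)`. Hence it vanishes as soon as it vanishes on pairs from a set
`s` with `s ∪ J s` spanning. For `𝒢₆,₃` take `s = {x₁, x₃, x₅}`: the three remaining values
`N x₁ x₃`, `N x₁ x₅`, `N x₃ x₅` are computed directly from the brackets.
-/

section Nijenhuis

variable {R L : Type*} [CommRing R] [LieRing L] [LieAlgebra R L] (J : L →ₗ[R] L)

def nijenhuis : L →ₗ[R] L →ₗ[R] L :=
  LinearMap.mk₂ R (fun X Y => ⁅J X, J Y⁆ - ⁅X, Y⁆ - J ⁅J X, Y⁆ - J ⁅X, J Y⁆)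
    (by intros; simp only [map_add, add_lie]; abel)
    (by intros; simp only [map_smul, smul_lie, smul_sub])
    (by intros; simp only [map_add, lie_add]; abel)
    (by intros; simp only [map_smul, lie_smul, smul_sub])

theorem nijenhuis_apply (X Y : L) :
    nijenhuis J X Y = ⁅J X, J Y⁆ - ⁅X, Y⁆ - J ⁅J X, Y⁆ - J ⁅X, J Y⁆ :=
  rfl

theorem nijenhuis_swap (X Y : L) : nijenhuis J Y X = -nijenhuis J X Y := by
  rw [nijenhuis_apply, nijenhuis_apply, ← lie_skew (J Y), ← lie_skew Y X, ← lie_skew (J Y) X,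
    ← lie_skew Y (J X), map_neg, map_neg]
  abel

theorem nijenhuis_self (X : L) : nijenhuis J X X = 0 := by
  rw [nijenhuis_apply, lie_self, lie_self, sub_sub, ← map_add, ← lie_skew X (J X),
    add_neg_cancel, map_zero, sub_zero, sub_zero]

variable {J}

theorem nijenhuis_apply_left (hJ : ∀ X, J (J X) = -X) (X Y : L) :
    nijenhuis J (J X) Y = -J (nijenhuis J X Y) := by
  simp only [nijenhuis_apply, hJ, map_sub, map_neg, neg_lie]
  abel

theorem nijenhuis_apply_right (hJ : ∀ X, J (J X) = -X) (X Y : L) :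
    nijenhuis J X (J Y) = -J (nijenhuis J X Y) := by
  rw [nijenhuis_swap, nijenhuis_apply_left hJ, nijenhuis_swap J Y X, map_neg, neg_neg]

theorem nijenhuis_eq_zero_of_span_union_image (hJ : ∀ X, J (J X) = -X) {s : Set L}
    (hs : Submodule.span R (s ∪ J '' s) = ⊤) (hN : ∀ u ∈ s, ∀ w ∈ s, nijenhuis J u w = 0) :
    nijenhuis J = 0 := by
  have hN' : ∀ u ∈ s ∪ J '' s, ∀ w ∈ s ∪ J '' s, nijenhuis J u w = 0 := by
    rintro u (hu | ⟨u, hu, rfl⟩) w (hw | ⟨w, hw, rfl⟩)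
    · exact hN u hu w hw
    · rw [nijenhuis_apply_right hJ, hN u hu w hw, map_zero, neg_zero]
    · rw [nijenhuis_apply_left hJ, hN u hu w hw, map_zero, neg_zero]
    · rw [nijenhuis_apply_left hJ, nijenhuis_apply_right hJ, hN u hu w hw, map_zero, neg_zero,
        map_zero, neg_zero]
  exact LinearMap.ext_on hs fun u hu => LinearMap.ext_on hs fun w hw => hN' u hu w hw

end Nijenhuis

theorem g63_J0_integrable_general
    (L : Type*) [LieRing L] [LieAlgebra ℝ L]
    (x : Module.Basis (Fin 6) ℝ L)
    (h02 : ⁅x 0, x 2⁆ = x 4) (h12 : ⁅x 1, x 2⁆ = x 5)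
    (h03 : ⁅x 0, x 3⁆ = 0) (h04 : ⁅x 0, x 4⁆ = 0) (h05 : ⁅x 0, x 5⁆ = 0)
    (h13 : ⁅x 1, x 3⁆ = 0) (h14 : ⁅x 1, x 4⁆ = 0) (h15 : ⁅x 1, x 5⁆ = 0)
    (h24 : ⁅x 2, x 4⁆ = 0) (h25 : ⁅x 2, x 5⁆ = 0)
    (h34 : ⁅x 3, x 4⁆ = 0) (h35 : ⁅x 3, x 5⁆ = 0)
    (J : L →ₗ[ℝ] L)
    (hJ0 : J (x 0) = x 1) (hJ1 : J (x 1) = -x 0)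
    (hJ2 : J (x 2) = x 3) (hJ3 : J (x 3) = -x 2)
    (hJ4 : J (x 4) = x 5) (hJ5 : J (x 5) = -x 4) :
    (∀ X : L, J (J X) = -X) ∧
    (∀ X Y : L, ⁅J X, J Y⁆ - ⁅X, Y⁆ - J ⁅J X, Y⁆ - J ⁅X, J Y⁆ = 0) := by
  have hJJ : ∀ X, J (J X) = -X := by
    have : J ∘ₗ J = -LinearMap.id := x.ext fun i => by
      fin_cases i <;> simp [hJ0, hJ1, hJ2, hJ3, hJ4, hJ5]
    exact fun X => LinearMap.congr_fun this X
  refine ⟨hJJ, fun X Y => ?_⟩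
  have hspan : Submodule.span ℝ ({x 0, x 2, x 4} ∪ J '' {x 0, x 2, x 4}) = ⊤ := by
    refine eq_top_iff.2 (x.span_eq ▸ Submodule.span_mono ?_)
    rintro _ ⟨i, rfl⟩
    fin_cases i <;> simp [← hJ0, ← hJ2, ← hJ4]
  have hN02 : nijenhuis J (x 0) (x 2) = 0 := by
    simp [nijenhuis_apply, hJ0, hJ2, h02, h03, h12, h13, hJ5]
  have hN04 : nijenhuis J (x 0) (x 4) = 0 := by
    simp [nijenhuis_apply, hJ0, hJ4, h04, h05, h14, h15]
  have hN24 : nijenhuis J (x 2) (x 4) = 0 := by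
    simp [nijenhuis_apply, hJ2, hJ4, h24, h25, h34, h35]
  have hN := nijenhuis_eq_zero_of_span_union_image hJJ hspan <| by
    simp only [Set.mem_insert_iff, Set.mem_singleton_iff]
    rintro _ (rfl | rfl | rfl) _ (rfl | rfl | rfl) <;>
      first
        | exact nijenhuis_self J _
        | assumption
        | rw [nijenhuis_swap]; simpa only [neg_eq_zero]
  exact LinearMap.congr_fun₂ hN X Y

/-- On the Lie algebra `𝒢₆,₃` (brackets `[x₁,x₂]=x₄`, `[x₁,x₃]=x₅`, `[x₂,x₃]=x₆`),
the map `J₀` with `J₀x₁=x₂, J₀x₃=x₄, J₀x₅=x₆` (and `J₀²=-1`) is an integrable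
almost complex structure. -/
theorem g63_J0_integrable
    (L : Type*) [LieRing L] [LieAlgebra ℝ L]
    (x : Module.Basis (Fin 6) ℝ L)
    (h01 : ⁅x 0, x 1⁆ = x 3) (h02 : ⁅x 0, x 2⁆ = x 4) (h12 : ⁅x 1, x 2⁆ = x 5)
    (h03 : ⁅x 0, x 3⁆ = 0) (h04 : ⁅x 0, x 4⁆ = 0) (h05 : ⁅x 0, x 5⁆ = 0)
    (h13 : ⁅x 1, x 3⁆ = 0) (h14 : ⁅x 1, x 4⁆ = 0) (h15 : ⁅x 1, x 5⁆ = 0)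
    (h23 : ⁅x 2, x 3⁆ = 0) (h24 : ⁅x 2, x 4⁆ = 0) (h25 : ⁅x 2, x 5⁆ = 0)
    (h34 : ⁅x 3, x 4⁆ = 0) (h35 : ⁅x 3, x 5⁆ = 0) (h45 : ⁅x 4, x 5⁆ = 0)
    (J : L →ₗ[ℝ] L)
    (hJ0 : J (x 0) = x 1) (hJ1 : J (x 1) = -x 0)
    (hJ2 : J (x 2) = x 3) (hJ3 : J (x 3) = -x 2)
    (hJ4 : J (x 4) = x 5) (hJ5 : J (x 5) = -x 4) :
    (∀ X : L, J (J X) = -X) ∧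
    (∀ X Y : L, ⁅J X, J Y⁆ - ⁅X, Y⁆ - J ⁅J X, Y⁆ - J ⁅X, J Y⁆ = 0) :=
  g63_J0_integrable_general L x h02 h12 h03 h04 h05 h13 h14 h15 h24 h25 h34 h35 J hJ0 hJ1 hJ2 hJ3
    hJ4 hJ5
end

section
/- Let M5 be the realification of the complex Heisenberg algebra, with basis x₁,…,x₆ and nonzero brackets [x₁,x₃]=x₅, [x₁,x₄]=x₆, [x₂,x₃]=−x₆, [x₂,x₄]=x₅. For real α and β ≠ 0, define J(α,β) by J x₁ = −x₄, J x₄ = x₁, J x₂ = −x₃, J x₃ = x₂, J x₅ = α x₅ + β x₆, J x₆ = −((α²+1)/β) x₅ − α x₆. Then J(α,β)² = −1, J(α,β) satisfies the Nijenhuis integrability condition, and the associated subalgebra m = {X − iJX} of the complexification of M5 is abelian. -/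
/-!
`J(α,β)` is an abelian complex structure: `J² = -1` and `⁅J X, J Y⁆ = ⁅X, Y⁆`, both of which are
checked on the basis (the bracket identity only for `i < j`, by skew-symmetry). Substituting
`J Y` for `Y` gives `⁅J X, Y⁆ = -⁅X, J Y⁆`, after which the Nijenhuis tensor and the bracket of
two elements of `m` vanish term by term.
-/

open TensorProduct

namespace LieAlgebra

variable {R L : Type*} [CommRing R] [LieRing L] [LieAlgebra R L]

theorem lie_apply_apply_eq_of_basis {ι : Type*} [LinearOrder ι] (b : Module.Basis ι R L)
    (J : L →ₗ[R] L) (h : ∀ i j, i < j → ⁅J (b i), J (b j)⁆ = ⁅b i, b j⁆) (X Y : L) :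
    ⁅J X, J Y⁆ = ⁅X, Y⁆ := by
  let ad : L →ₗ[R] L →ₗ[R] L := (ad R L : L →ₗ[R] Module.End R L)
  suffices ad.compl₁₂ J J = ad from LinearMap.congr_fun₂ this X Y
  refine LinearMap.ext_basis b b fun i j => ?_
  simp only [LinearMap.compl₁₂_apply, ad, LieHom.coe_toLinearMap, ad_apply]
  rcases lt_trichotomy i j with hij | rfl | hji
  · exact h i j hij
  · simp only [lie_self]
  · rw [← lie_skew, h j i hji, lie_skew]

structure IsAbelianComplexStructure (J : L →ₗ[R] L) : Prop where
  apply_apply : ∀ X, J (J X) = -X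
  lie_apply_apply : ∀ X Y, ⁅J X, J Y⁆ = ⁅X, Y⁆

namespace IsAbelianComplexStructure

variable {J : L →ₗ[R] L} (hJ : IsAbelianComplexStructure J)
include hJ

theorem lie_apply_left (X Y : L) : ⁅J X, Y⁆ = -⁅X, J Y⁆ := by
  rw [← hJ.lie_apply_apply X (J Y), hJ.apply_apply, lie_neg, neg_neg]

theorem nijenhuis_eq_zero (X Y : L) : ⁅J X, J Y⁆ - ⁅X, Y⁆ - J ⁅J X, Y⁆ - J ⁅X, J Y⁆ = 0 := by
  rw [hJ.lie_apply_apply, hJ.lie_apply_left, map_neg]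
  abel

theorem lie_tmul_sub_tmul_eq_zero {A : Type*} [CommRing A] [Algebra R A] {i : A}
    (hi : i * i = -1) (X Y : L) :
    ⁅(1 : A) ⊗ₜ[R] X - i ⊗ₜ[R] J X, (1 : A) ⊗ₜ[R] Y - i ⊗ₜ[R] J Y⁆ = 0 := by
  simp only [sub_lie, lie_sub, ExtendScalars.bracket_tmul, hi, hJ.lie_apply_apply,
    hJ.lie_apply_left X Y, one_mul, mul_one, neg_tmul, tmul_neg]
  abel

end IsAbelianComplexStructure

end LieAlgebra

/-- On `M5` (the realification of the complex Heisenberg algebra), for real `α` and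
`β ≠ 0`, the map `J(α,β)` is an integrable almost complex structure whose
associated subalgebra `m = {X - i·JX}` of the complexification is abelian. -/
theorem M5_Jalphabeta_integrable_abelian
    (L : Type*) [LieRing L] [LieAlgebra ℝ L]
    (x : Module.Basis (Fin 6) ℝ L)
    (h02 : ⁅x 0, x 2⁆ = x 4) (h03 : ⁅x 0, x 3⁆ = x 5)
    (h12 : ⁅x 1, x 2⁆ = -x 5) (h13 : ⁅x 1, x 3⁆ = x 4)
    (h01 : ⁅x 0, x 1⁆ = 0) (h04 : ⁅x 0, x 4⁆ = 0) (h05 : ⁅x 0, x 5⁆ = 0)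
    (h14 : ⁅x 1, x 4⁆ = 0) (h15 : ⁅x 1, x 5⁆ = 0)
    (h23 : ⁅x 2, x 3⁆ = 0) (h24 : ⁅x 2, x 4⁆ = 0) (h25 : ⁅x 2, x 5⁆ = 0)
    (h34 : ⁅x 3, x 4⁆ = 0) (h35 : ⁅x 3, x 5⁆ = 0) (h45 : ⁅x 4, x 5⁆ = 0)
    (α β : ℝ) (hβ : β ≠ 0)
    (J : L →ₗ[ℝ] L)
    (hJ0 : J (x 0) = -x 3) (hJ3 : J (x 3) = x 0)
    (hJ1 : J (x 1) = -x 2) (hJ2 : J (x 2) = x 1)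
    (hJ4 : J (x 4) = α • x 4 + β • x 5)
    (hJ5 : J (x 5) = (-((α ^ 2 + 1) / β)) • x 4 + (-α) • x 5) :
    (∀ X : L, J (J X) = -X) ∧
    (∀ X Y : L, ⁅J X, J Y⁆ - ⁅X, Y⁆ - J ⁅J X, Y⁆ - J ⁅X, J Y⁆ = 0) ∧
    (∀ X Y : L,
      ⁅(1 : ℂ) ⊗ₜ[ℝ] X - Complex.I ⊗ₜ[ℝ] (J X),
       (1 : ℂ) ⊗ₜ[ℝ] Y - Complex.I ⊗ₜ[ℝ] (J Y)⁆ = (0 : ℂ ⊗[ℝ] L)) := by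
  have hJJ : J ∘ₗ J = -LinearMap.id := by
    refine x.ext fun i => ?_
    fin_cases i <;>
      simp [hJ0, hJ1, hJ2, hJ3, hJ4, hJ5, smul_smul, mul_div_cancel₀ _ hβ, div_mul_cancel₀ _ hβ] <;>
      module
  have hlie : ∀ X Y : L, ⁅J X, J Y⁆ = ⁅X, Y⁆ :=
    LieAlgebra.lie_apply_apply_eq_of_basis x J fun i j hij => by
      fin_cases i <;> fin_cases j <;>
        simp [hJ0, hJ1, hJ2, hJ3, hJ4, hJ5, h02, h03, h12, h13, h01, h04, h05, h14, h15, h23, h24,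
          h25, h34, h35, h45, ← lie_skew (x 1) (x 0), ← lie_skew (x 5) (x 4)] at hij ⊢
  have hJ : LieAlgebra.IsAbelianComplexStructure J := ⟨LinearMap.congr_fun hJJ, hlie⟩
  exact ⟨hJ.apply_apply, hJ.nijenhuis_eq_zero, hJ.lie_tmul_sub_tmul_eq_zero Complex.I_mul_I⟩
end
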